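/- arXiv:1511.06473 — 4 statements merged into one kernel-verified Lean document; each statement's English description precedes it below -/
import Mathlib

section
/- Let C ⊆ B be an integral extension of commutative rings. Assume either that (1) C is zero-dimensional with only finitely many minimal primes, or that (2) there is a minimal prime p of C such that only finitely many primes of B lie over p and every other minimal prime of C has exactly one prime of B lying over it. Then there exists a ring A with C ⊆ A ⊆ B such that the extension A ⊆ B is globally fragile and such that under the contraction map Spec A → Spec C, every minimal prime of C has exactly one preimage in Spec A. -/
/-- A ring homomorphism `f : A →+* B` satisfies going-down: whenever `p₁ ⊆ p₂` are primes of `A`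
and `Q₂` is a prime of `B` contracting to `p₂`, there is a prime `Q₁ ⊆ Q₂` of `B`
contracting to `p₁`. -/
def GoingDownHom {A B : Type*} [CommRing A] [CommRing B] (f : A →+* B) : Prop :=
  ∀ (p₁ p₂ : Ideal A), p₁.IsPrime → p₂.IsPrime → p₁ ≤ p₂ →
    ∀ Q₂ : Ideal B, Q₂.IsPrime → Q₂.comap f = p₂ →
      ∃ Q₁ : Ideal B, Q₁.IsPrime ∧ Q₁ ≤ Q₂ ∧ Q₁.comap f = p₁

/-- The canonical map from the localization of a subring `A ⊆ B` at a submonoid `W ⊆ A`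
to the localization of `B` at the image of `W` in `B`. -/
noncomputable def locMap {B : Type*} [CommRing B] (A : Subring B) (W : Submonoid A) :
    Localization W →+* Localization (W.map A.subtype) :=
  IsLocalization.lift (M := W) (S := Localization W)
    (g := (algebraMap B (Localization (W.map A.subtype))).comp A.subtype)
    (fun y => IsLocalization.map_units (M := W.map A.subtype) (Localization (W.map A.subtype))
      ⟨A.subtype y, ⟨y, y.2, rfl⟩⟩)

/-- A subring `A ⊆ B` is perinormal in `B` at the prime `p` of `A`:  the localization `A_p`
(i.e. the image of `Localization.AtPrime p` in `B_{A∖p}`) is the only local ring `T` between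
`A_p` and `B_{A∖p}` whose maximal ideal contracts to `pA_p` and which satisfies going-down
over `A_p`. -/
def PeriAt {B : Type*} [CommRing B] (A : Subring B) (p : Ideal A) (hp : p.IsPrime) : Prop :=
  haveI := hp
  ∀ (T : Subring (Localization (p.primeCompl.map A.subtype)))
    (hT : (locMap A p.primeCompl).range ≤ T),
    IsLocalRing T →
    (∀ M : Ideal T, M.IsMaximal →
      M.comap ((locMap A p.primeCompl).codRestrict T (fun x => hT ⟨x, rfl⟩)) =
        IsLocalRing.maximalIdeal (Localization.AtPrime p)) →
    GoingDownHom ((locMap A p.primeCompl).codRestrict T (fun x => hT ⟨x, rfl⟩)) →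
    T = (locMap A p.primeCompl).range

/-- A subring `A` of `B` is perinormal in `B`. -/
def PerinormalIn {B : Type*} [CommRing B] (A : Subring B) : Prop :=
  ∀ (p : Ideal A) (hp : p.IsPrime), PeriAt A p hp

/-- An integral domain `R` is perinormal:  every local overring of `R`
(local ring between `R` and its fraction field) satisfying going-down over `R`
is a localization of `R` at a prime ideal. -/
def PerinormalDomain (R : Type*) [CommRing R] [IsDomain R] : Prop :=
  ∀ (T : Subring (FractionRing R)) (hT : (algebraMap R (FractionRing R)).range ≤ T),
    IsLocalRing T →
    GoingDownHom ((algebraMap R (FractionRing R)).codRestrict T (fun x => hT ⟨x, rfl⟩)) →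
    ∃ p : Ideal R, p.IsPrime ∧
      (T : Set (FractionRing R)) =
        {x | ∃ r s : R, s ∉ p ∧
          x * algebraMap R (FractionRing R) s = algebraMap R (FractionRing R) r}

/-- A subring `A ⊆ B` is apparently fragile in `B`: for every ring `C` with `A ⊊ C ⊆ B`
there are a minimal prime `p` of `A` and distinct primes `P, Q` of `C` contracting to `p`. -/
def ApparentlyFragile {B : Type*} [CommRing B] (A : Subring B) : Prop :=
  ∀ (C : Subring B) (hAC : A ≤ C), A ≠ C →
    ∃ p ∈ minimalPrimes A, ∃ P Q : Ideal C, P.IsPrime ∧ Q.IsPrime ∧ P ≠ Q ∧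
      P.comap (Subring.inclusion hAC) = p ∧ Q.comap (Subring.inclusion hAC) = p

/-- A subring `A ⊆ B` is fragile in `B`: for every prime `P` of `A`, the extension
`A_P ⊆ B_{A∖P}` is apparently fragile. -/
def Fragile {B : Type*} [CommRing B] (A : Subring B) : Prop :=
  ∀ (P : Ideal A) (hP : P.IsPrime),
    haveI := hP
    ApparentlyFragile (locMap A P.primeCompl).range

/-- A subring `A ⊆ B` is globally fragile in `B`: for every multiplicative subset `W` of `A`,
the extension `A_W ⊆ B_W` is apparently fragile. -/
def GloballyFragile {B : Type*} [CommRing B] (A : Subring B) : Prop :=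
  ∀ W : Submonoid A, ApparentlyFragile (locMap A W).range

/-- An integral domain `S` is a generalized Krull domain: (i) `S` is the intersection of its
localizations at height-one primes (inside its fraction field), (ii) every nonzero element lies
in only finitely many height-one primes, and (iii) the localization at every height-one prime
is a valuation ring. -/
def IsGenKrull (S : Type*) [CommRing S] [IsDomain S] : Prop :=
  (∀ x : FractionRing S,
      (∀ (p : Ideal S) (hp : p.IsPrime), Order.height (⟨p, hp⟩ : PrimeSpectrum S) = 1 →
        ∃ a s : S, s ∉ p ∧ x * algebraMap S (FractionRing S) s = algebraMap S (FractionRing S) a) →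
      ∃ r : S, algebraMap S (FractionRing S) r = x) ∧
  (∀ s : S, s ≠ 0 →
      {p : Ideal S | ∃ hp : p.IsPrime, Order.height (⟨p, hp⟩ : PrimeSpectrum S) = 1 ∧ s ∈ p}.Finite) ∧
  (∀ (p : Ideal S) (hp : p.IsPrime), Order.height (⟨p, hp⟩ : PrimeSpectrum S) = 1 →
      haveI := hp
      ValuationRing (Localization.AtPrime p))

/-- A prime ideal `Q` has height one. -/
def HeightOne {S : Type*} [CommRing S] (Q : Ideal S) : Prop :=
  ∃ hQ : Q.IsPrime, Order.height (⟨Q, hQ⟩ : PrimeSpectrum S) = 1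

/-!
By Zorn's lemma choose `C ⊆ A ⊆ B` maximal such that any two primes of `B` over the same
minimal prime of `C` contract to the same prime of `A`. Lying over for the integral extension
`A ⊆ B` then leaves exactly one prime of `A` over each minimal prime of `C`.

Suppose `A_W ⊊ D ⊆ B_W` and pick `b / w₀ ∈ D ∖ A_W`. Only finitely many minimal primes of `C`
have several primes of `B` above them, so a single `w ∈ W` lies in every prime of every such
fibre that meets `W`. Over those fibres `A[w b]` separates no primes, as it is congruent to `A`
modulo their intersection. Over the remaining split fibres the primes survive in `B_W`; if `D`
separated two of them, they would be distinct primes of `D` over one minimal prime of `A_W`.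
So if `D` has no such pair, `A[w b]` separates no primes over minimal primes either, maximality
gives `w b ∈ A`, and `b / w₀ = w b / (w w₀) ∈ A_W`, a contradiction.
-/

theorem Ideal.mem_minimalPrimes_of_comap_mem_minimalPrimes {R S : Type*} [CommRing R]
    [CommRing S] (f : R →+* S) {P : Ideal S} [P.IsPrime] (hP : P.comap f ∈ minimalPrimes R)
    (huniq : ∀ P' : Ideal S, P'.IsPrime → P'.comap f = P.comap f → P' = P) :
    P ∈ minimalPrimes S := by
  refine ⟨⟨‹_›, bot_le⟩, fun P' ⟨hP', _⟩ hle => (huniq P' hP' ?_).ge⟩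
  exact le_antisymm (Ideal.comap_mono hle) (hP.2 ⟨hP'.comap f, bot_le⟩ (Ideal.comap_mono hle))

theorem Submonoid.exists_mem_forall_mem_of_finite {R ι : Type*} [CommRing R] (W : Submonoid R)
    {S : Set ι} (hS : S.Finite) (F : ι → Set (Ideal R))
    (h : ∀ i ∈ S, ∃ w ∈ W, ∀ J ∈ F i, w ∈ J) : ∃ w ∈ W, ∀ i ∈ S, ∀ J ∈ F i, w ∈ J := by
  induction S, hS using Set.Finite.induction_on with
  | empty => exact ⟨1, W.one_mem, by simp⟩
  | @insert i S _ _ ih =>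
    obtain ⟨w, hwW, hw⟩ := h i (Set.mem_insert i S)
    obtain ⟨w', hw'W, hw'⟩ := ih fun j hj => h j (Set.mem_insert_of_mem i hj)
    refine ⟨w * w', W.mul_mem hwW hw'W, ?_⟩
    rintro j (rfl | hj) J hJ
    · exact J.mul_mem_right _ (hw J hJ)
    · exact J.mul_mem_left _ (hw' j hj J hJ)

section

variable {B : Type*} [CommRing B]

theorem Subring.comap_subtype_eq_of_le {A A' : Subring B} (h : A' ≤ A) {Q₁ Q₂ : Ideal B}
    (hQ : Q₁.comap A.subtype = Q₂.comap A.subtype) :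
    Q₁.comap A'.subtype = Q₂.comap A'.subtype :=
  congrArg (Ideal.comap (Subring.inclusion h)) hQ

theorem Subring.comap_subtype_closure_insert_eq {A : Subring B} {Q₁ Q₂ : Ideal B} {x : B}
    (hQ : Q₁.comap A.subtype = Q₂.comap A.subtype) (hx : x ∈ Q₁ ⊓ Q₂) :
    Q₁.comap (closure (insert x (A : Set B))).subtype =
      Q₂.comap (closure (insert x (A : Set B))).subtype := by
  let π := Ideal.Quotient.mk (Q₁ ⊓ Q₂)
  have hle : closure (insert x (A : Set B)) ≤ (A.map π).comap π := by
    refine closure_le.2 (Set.insert_subset ⟨0, A.zero_mem, ?_⟩ fun a ha => ⟨a, ha, rfl⟩)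
    rw [map_zero, eq_comm, Ideal.Quotient.eq_zero_iff_mem]
    exact hx
  ext ⟨z, hz⟩
  show z ∈ Q₁ ↔ z ∈ Q₂
  obtain ⟨a, ha, haz⟩ := hle hz
  obtain ⟨h₁, h₂⟩ := Submodule.mem_inf.1 (Ideal.Quotient.eq.1 haz)
  have hmem : ∀ Q : Ideal B, a - z ∈ Q → (z ∈ Q ↔ a ∈ Q) := fun Q h =>
    ⟨fun hz => (Q.sub_mem_iff_left hz).1 h, fun ha => (Q.sub_mem_iff_right ha).1 h⟩
  rw [hmem Q₁ h₁, hmem Q₂ h₂]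
  exact SetLike.ext_iff.1 hQ ⟨a, ha⟩

theorem Subring.exists_prime_comap_subtype_eq {A : Subring B} [Algebra.IsIntegral A B]
    (P : Ideal A) [P.IsPrime] : ∃ Q : Ideal B, Q.IsPrime ∧ Q.comap A.subtype = P := by
  obtain ⟨Q, -, hQ, hQP⟩ := Ideal.exists_ideal_over_prime_of_isIntegral P (⊥ : Ideal B) (by simp)
  exact ⟨Q, hQ, hQP⟩

theorem Subring.isIntegral_of_le {C A : Subring B} (hCA : C ≤ A) [Algebra.IsIntegral C B] :
    Algebra.IsIntegral A B := by
  let _ : Algebra C A := (Subring.inclusion hCA).toAlgebra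
  have : IsScalarTower C A B := IsScalarTower.of_algebraMap_eq fun _ => rfl
  exact Algebra.IsIntegral.tower_top C

def primeFibre (C : Subring B) (p : Ideal C) : Set (Ideal B) :=
  {Q | Q.IsPrime ∧ Q.comap C.subtype = p}

def CollapsesMinimalFibres (C A : Subring B) : Prop :=
  ∀ p ∈ minimalPrimes C, ∀ Q₁ ∈ primeFibre C p, ∀ Q₂ ∈ primeFibre C p,
    Q₁.comap A.subtype = Q₂.comap A.subtype

theorem exists_maximal_collapsesMinimalFibres (C : Subring B) :
    ∃ A, Maximal (fun A => C ≤ A ∧ CollapsesMinimalFibres C A) A := by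
  let s := {A : Subring B | C ≤ A ∧ CollapsesMinimalFibres C A}
  suffices hchain : ∀ c ⊆ s, IsChain (· ≤ ·) c → ∀ y ∈ c, sSup c ∈ s by
    obtain ⟨A, -, hA⟩ := zorn_le_nonempty₀ s
      (fun c hcs hc y hy => ⟨sSup c, hchain c hcs hc y hy, fun _ => le_sSup⟩) C
      ⟨le_rfl, fun p _ Q₁ hQ₁ Q₂ hQ₂ => hQ₁.2.trans hQ₂.2.symm⟩
    exact ⟨A, hA⟩
  intro c hcs hc y hy
  refine ⟨(hcs hy).1.trans (le_sSup hy), fun p hp Q₁ hQ₁ Q₂ hQ₂ => ?_⟩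
  ext ⟨a, ha⟩
  obtain ⟨A, hAc, haA⟩ := (Subring.mem_sSup_of_directedOn ⟨y, hy⟩ hc.directedOn).1 ha
  exact SetLike.ext_iff.1 ((hcs hAc).2 p hp Q₁ hQ₁ Q₂ hQ₂) ⟨a, haA⟩

section

variable {C A : Subring B} [Algebra.IsIntegral C B]

theorem CollapsesMinimalFibres.existsUnique_comap_eq (hCA : C ≤ A)
    (hA : CollapsesMinimalFibres C A) {p : Ideal C} (hp : p ∈ minimalPrimes C) :
    ∃! P : Ideal A, P.IsPrime ∧ P.comap (Subring.inclusion hCA) = p := by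
  have := hp.1.1
  have := Subring.isIntegral_of_le hCA
  obtain ⟨Q, hQ, hQp⟩ := Subring.exists_prime_comap_subtype_eq p
  refine ⟨Q.comap A.subtype, ⟨hQ.comap _, hQp⟩, fun P ⟨hP, hPp⟩ => ?_⟩
  obtain ⟨Q', hQ', rfl⟩ := Subring.exists_prime_comap_subtype_eq P
  exact hA p hp Q' ⟨hQ', hPp⟩ Q ⟨hQ, hQp⟩

theorem CollapsesMinimalFibres.comap_mem_minimalPrimes (hCA : C ≤ A)
    (hA : CollapsesMinimalFibres C A) {p : Ideal C} (hp : p ∈ minimalPrimes C) {Q : Ideal B}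
    (hQ : Q ∈ primeFibre C p) : Q.comap A.subtype ∈ minimalPrimes A := by
  have := hQ.1
  have hQp : (Q.comap A.subtype).comap (Subring.inclusion hCA) = p := hQ.2
  refine Ideal.mem_minimalPrimes_of_comap_mem_minimalPrimes (Subring.inclusion hCA)
    (hQp ▸ hp) fun P hP hPQ => ?_
  exact (hA.existsUnique_comap_eq hCA hp).unique ⟨hP, hPQ.trans hQp⟩ ⟨inferInstance, hQp⟩

end

section Localization

variable (A : Subring B) (W : Submonoid A)

noncomputable def toLocMapRange : A →+* (locMap A W).range :=
  (locMap A W).rangeRestrict.comp (algebraMap A (Localization W))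

theorem comap_toLocMapRange_injective :
    Function.Injective (Ideal.comap (toLocMapRange A W)) := by
  intro I J h
  apply Ideal.comap_injective_of_surjective _ (locMap A W).rangeRestrict_surjective
  apply (IsLocalization.orderEmbedding W (Localization W)).injective
  simp only [toLocMapRange, ← Ideal.comap_comap] at h
  exact h

theorem subtype_comp_toLocMapRange :
    (locMap A W).range.subtype.comp (toLocMapRange A W) =
      (algebraMap B (Localization (W.map A.subtype))).comp A.subtype :=
  RingHom.ext fun a => IsLocalization.lift_eq _ a

theorem comap_toLocMapRange_comap_map {Q : Ideal B} [Q.IsPrime]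
    (hQ : Disjoint (W.map A.subtype : Set B) Q) :
    ((Q.map (algebraMap B (Localization (W.map A.subtype)))).comap
      (locMap A W).range.subtype).comap (toLocMapRange A W) = Q.comap A.subtype := by
  rw [Ideal.comap_comap, subtype_comp_toLocMapRange, ← Ideal.comap_comap,
    ← Ideal.under_def, IsLocalization.under_map_of_isPrime_disjoint _ _ ‹_› hQ]

theorem mem_locMap_range_of_mul_eq {x : Localization (W.map A.subtype)} {a : A} {w : W}
    (h : x * algebraMap B _ (w : A) = algebraMap B _ a) : x ∈ (locMap A W).range :=
  ⟨IsLocalization.mk' _ a w,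
    (IsLocalization.lift_mk'_spec _ _ _ _).2 (by simpa [mul_comm] using h.symm)⟩

theorem algebraMap_mem_locMap_range (a : A) :
    algebraMap B (Localization (W.map A.subtype)) a ∈ (locMap A W).range :=
  ⟨algebraMap A _ a, IsLocalization.lift_eq _ a⟩

end Localization

theorem exists_two_primes_over_minimalPrime_of_comap_ne (A : Subring B) (W : Submonoid A)
    (D : Subring (Localization (W.map A.subtype))) (hRD : (locMap A W).range ≤ D)
    {Q₁ Q₂ : Ideal B} [Q₁.IsPrime] [Q₂.IsPrime]
    (hW₁ : Disjoint (W.map A.subtype : Set B) Q₁) (hW₂ : Disjoint (W.map A.subtype : Set B) Q₂)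
    (hA : Q₁.comap A.subtype = Q₂.comap A.subtype) (hmin : Q₁.comap A.subtype ∈ minimalPrimes A)
    (hD : Q₁.comap (D.comap (algebraMap B _)).subtype ≠
      Q₂.comap (D.comap (algebraMap B _)).subtype) :
    ∃ q ∈ minimalPrimes (locMap A W).range, ∃ P Q : Ideal D, P.IsPrime ∧ Q.IsPrime ∧ P ≠ Q ∧
      P.comap (Subring.inclusion hRD) = q ∧ Q.comap (Subring.inclusion hRD) = q := by
  let L := Localization (W.map A.subtype)
  have := IsLocalization.isPrime_of_isPrime_disjoint _ L Q₁ ‹_› hW₁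
  have := IsLocalization.isPrime_of_isPrime_disjoint _ L Q₂ ‹_› hW₂
  have hq : (Q₁.map (algebraMap B L)).comap (locMap A W).range.subtype =
      (Q₂.map (algebraMap B L)).comap (locMap A W).range.subtype := by
    apply comap_toLocMapRange_injective
    rw [comap_toLocMapRange_comap_map A W hW₁, comap_toLocMapRange_comap_map A W hW₂, hA]
  have hqmin : (Q₁.map (algebraMap B L)).comap (locMap A W).range.subtype ∈ minimalPrimes _ := by
    refine Ideal.mem_minimalPrimes_of_comap_mem_minimalPrimes (toLocMapRange A W) ?_
      fun P _ hP => comap_toLocMapRange_injective A W hP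
    rwa [comap_toLocMapRange_comap_map A W hW₁]
  have hmem : ∀ (Q : Ideal B) [Q.IsPrime], Disjoint (W.map A.subtype : Set B) Q →
      ∀ b, algebraMap B L b ∈ Q.map (algebraMap B L) ↔ b ∈ Q := fun Q _ hQ b => by
    rw [← Ideal.mem_comap, ← Ideal.under_def,
      IsLocalization.under_map_of_isPrime_disjoint _ L ‹_› hQ]
  refine ⟨_, hqmin, (Q₁.map (algebraMap B L)).comap D.subtype,
    (Q₂.map (algebraMap B L)).comap D.subtype, Ideal.IsPrime.comap _, Ideal.IsPrime.comap _,
    fun hPQ => hD ?_, rfl, hq.symm⟩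
  ext ⟨b, hb⟩
  show b ∈ Q₁ ↔ b ∈ Q₂
  rw [← hmem Q₁ hW₁, ← hmem Q₂ hW₂]
  exact SetLike.ext_iff.1 hPQ ⟨algebraMap B L b, hb⟩

theorem CollapsesMinimalFibres.closure_insert {C A D : Subring B}
    (hA : CollapsesMinimalFibres C A) (hAD : A ≤ D) {x : B} (hxD : x ∈ D) (S : Set (Ideal C))
    (hS : ∀ p ∈ S, ∀ Q ∈ primeFibre C p, x ∈ Q)
    (hD : ∀ p ∈ minimalPrimes C, p ∉ S → ∀ Q₁ ∈ primeFibre C p, ∀ Q₂ ∈ primeFibre C p,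
      Q₁.comap D.subtype = Q₂.comap D.subtype) :
    CollapsesMinimalFibres C (Subring.closure (insert x (A : Set B))) := by
  intro p hp Q₁ hQ₁ Q₂ hQ₂
  by_cases hpS : p ∈ S
  · exact Subring.comap_subtype_closure_insert_eq (hA p hp Q₁ hQ₁ Q₂ hQ₂)
      ⟨hS p hpS Q₁ hQ₁, hS p hpS Q₂ hQ₂⟩
  · exact Subring.comap_subtype_eq_of_le (Subring.closure_le.2 (Set.insert_subset hxD hAD))
      (hD p hp hpS Q₁ hQ₁ Q₂ hQ₂)

theorem CollapsesMinimalFibres.exists_mem_forall_primeFibre {C A : Subring B}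
    (hA : CollapsesMinimalFibres C A) (W : Submonoid A) {S : Set (Ideal C)} (hS : S.Finite)
    (hSmin : S ⊆ minimalPrimes C)
    (hmeet : ∀ p ∈ S, ∃ Q ∈ primeFibre C p, ¬ Disjoint (W.map A.subtype : Set B) Q) :
    ∃ w ∈ W, ∀ p ∈ S, ∀ Q ∈ primeFibre C p, (w : B) ∈ Q := by
  obtain ⟨_, ⟨w, hwW, rfl⟩, hw⟩ :=
    (W.map A.subtype).exists_mem_forall_mem_of_finite hS (primeFibre C) fun p hp => by
      obtain ⟨Q, hQ, hWQ⟩ := hmeet p hp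
      obtain ⟨_, ⟨w, hw, rfl⟩, hwQ⟩ := Set.not_disjoint_iff.1 hWQ
      exact ⟨w, ⟨w, hw, rfl⟩, fun Q' hQ' =>
        (SetLike.ext_iff.1 (hA p (hSmin hp) Q hQ Q' hQ') w).1 hwQ⟩
  exact ⟨w, hwW, hw⟩

theorem globallyFragile_of_maximal {C A : Subring B} [Algebra.IsIntegral C B]
    (hA : Maximal (fun A => C ≤ A ∧ CollapsesMinimalFibres C A) A)
    (hfin : {p ∈ minimalPrimes C | ¬ (primeFibre C p).Subsingleton}.Finite) :
    GloballyFragile A := by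
  intro W D hRD hne
  by_contra hwit
  let L := Localization (W.map A.subtype)
  let D' := D.comap (algebraMap B L)
  have hAD' : A ≤ D' := fun a ha => hRD (algebraMap_mem_locMap_range A W ⟨a, ha⟩)
  obtain ⟨x, hxD, hxR⟩ := SetLike.exists_of_lt (hRD.lt_of_ne hne)
  obtain ⟨⟨b, _, ⟨w₀, hw₀, rfl⟩⟩, hx⟩ := IsLocalization.mk'_surjective (W.map A.subtype) x
  have hb : x * algebraMap B L w₀ = algebraMap B L b := hx ▸ IsLocalization.mk'_spec _ _ _
  have hbD' : b ∈ D' := by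
    show algebraMap B L b ∈ D
    rw [← hb]
    exact D.mul_mem hxD (hRD (algebraMap_mem_locMap_range A W w₀))
  let S := {p ∈ minimalPrimes C | ¬ (primeFibre C p).Subsingleton ∧
    ∃ Q ∈ primeFibre C p, ¬ Disjoint (W.map A.subtype : Set B) Q}
  obtain ⟨w, hwW, hw⟩ := hA.prop.2.exists_mem_forall_primeFibre W (S := S)
    (hfin.subset fun p hp => ⟨hp.1, hp.2.1⟩) (fun p hp => hp.1) fun p hp => hp.2.2
  have hD : ∀ p ∈ minimalPrimes C, p ∉ S → ∀ Q₁ ∈ primeFibre C p, ∀ Q₂ ∈ primeFibre C p,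
      Q₁.comap D'.subtype = Q₂.comap D'.subtype := by
    intro p hp hpS Q₁ hQ₁ Q₂ hQ₂
    by_contra hne
    have hnsub : ¬ (primeFibre C p).Subsingleton := fun h => hne (by rw [h hQ₁ hQ₂])
    have hdisj : ∀ Q ∈ primeFibre C p, Disjoint (W.map A.subtype : Set B) Q :=
      fun Q hQ => by_contra fun h => hpS ⟨hp, hnsub, Q, hQ, h⟩
    have := hQ₁.1
    have := hQ₂.1
    exact hwit (exists_two_primes_over_minimalPrime_of_comap_ne A W D hRD (hdisj Q₁ hQ₁)
      (hdisj Q₂ hQ₂) (hA.prop.2 p hp Q₁ hQ₁ Q₂ hQ₂)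
      (hA.prop.2.comap_mem_minimalPrimes hA.prop.1 hp hQ₁) hne)
  have hAH : A ≤ Subring.closure (insert ((w : B) * b) A) :=
    fun a ha => Subring.subset_closure (Set.mem_insert_of_mem _ ha)
  have hwb : (w : B) * b ∈ A :=
    (hA.eq_of_le ⟨hA.prop.1.trans hAH, hA.prop.2.closure_insert hAD'
      (D'.mul_mem (hAD' w.2) hbD') S (fun p hp Q hQ => Q.mul_mem_right b (hw p hp Q hQ)) hD⟩ hAH).ge
      (Subring.subset_closure (Set.mem_insert _ _))
  refine hxR (mem_locMap_range_of_mul_eq A W (a := ⟨_, hwb⟩)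
    (w := ⟨w * w₀, W.mul_mem hwW hw₀⟩) ?_)
  simp only [Subring.coe_mul, map_mul]
  linear_combination algebraMap B L w * hb

end

/-- Let `C ⊆ B` be an integral extension.  If either (1) `C` is
zero-dimensional with finitely many minimal primes, or (2) some minimal prime `p` of `C` has
finitely many primes of `B` over it while every other minimal prime of `C` has exactly one
prime of `B` over it, then there is an intermediate ring `C ⊆ A ⊆ B` such that `A ⊆ B` is
globally fragile and every minimal prime of `C` has exactly one preimage under
`Spec A → Spec C`. -/
theorem exists_globallyFragile_intermediate {B : Type*} [CommRing B] (C : Subring B)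
    (hint : Algebra.IsIntegral C B)
    (hyp : ((∀ P : Ideal C, P.IsPrime → P.IsMaximal) ∧ (minimalPrimes C).Finite) ∨
      (∃ p ∈ minimalPrimes C, {Q : Ideal B | Q.IsPrime ∧ Q.comap C.subtype = p}.Finite ∧
        ∀ q ∈ minimalPrimes C, q ≠ p →
          ∃! Q : Ideal B, Q.IsPrime ∧ Q.comap C.subtype = q)) :
    ∃ A : Subring B, ∃ hCA : C ≤ A, GloballyFragile A ∧
      ∀ p ∈ minimalPrimes C,
        ∃! P : Ideal A, P.IsPrime ∧ P.comap (Subring.inclusion hCA) = p := by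
  have hfin : {p ∈ minimalPrimes C | ¬ (primeFibre C p).Subsingleton}.Finite := by
    rcases hyp with ⟨-, hfin⟩ | ⟨p₀, -, -, huniq⟩
    · exact hfin.subset fun p hp => hp.1
    · refine (Set.finite_singleton p₀).subset fun q ⟨hq, hsplit⟩ => ?_
      by_contra hne
      exact hsplit fun Q₁ hQ₁ Q₂ hQ₂ => (huniq q hq hne).unique hQ₁ hQ₂
  obtain ⟨A, hA⟩ := exists_maximal_collapsesMinimalFibres C
  exact ⟨A, hA.prop.1, globallyFragile_of_maximal hA hfin,
    fun p hp => hA.prop.2.existsUnique_comap_eq hA.prop.1 hp⟩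
end

section
/- Let S be an integral domain such that the set consisting of the units of S together with 0 forms a subfield k of S. Let J be a prime ideal of S such that every unit of S/J lies in the image of k in S/J. Let R be the pullback of the diagram k → S/J ← S, i.e., R = k + J = {s ∈ S : s + J ∈ image of k}. Then W = R ∖ J is a saturated multiplicatively closed subset of S, i.e., W is multiplicatively closed and whenever s, s′ ∈ S with s·s′ ∈ W, one has s ∈ W. -/
/-!
Writing `π : S → S/J` for the quotient map and `K = π(k)`, every nonzero element of `K` is the
image of a unit of `S`, and every unit of `S/J` lies in `K` by hypothesis; so `K ∖ {0}` is exactly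
the unit group of `S/J`, and `W = R ∖ J = π⁻¹(K ∖ {0})` is the preimage of the units. The preimage
of the units under a ring homomorphism is a saturated submonoid.
-/

theorem Subring.isUnit_of_mem_map_of_ne_zero {S T : Type*} [Ring S] [Ring T] (f : S →+* T)
    {k : Subring S} (hk : (k : Set S) = {s : S | IsUnit s ∨ s = 0}) {x : T}
    (hx : x ∈ k.map f) (hx0 : x ≠ 0) : IsUnit x := by
  obtain ⟨c, hc, rfl⟩ := Subring.mem_map.mp hx
  have hc' : c ∈ {s : S | IsUnit s ∨ s = 0} := hk ▸ hc
  rcases hc' with hunit | rfl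
  · exact hunit.map f
  · exact absurd (map_zero f) hx0

theorem Ideal.mem_comap_mk_diff_iff_isUnit {S : Type*} [CommRing S] {J : Ideal S} (hJ : J ≠ ⊤)
    {K : Subring (S ⧸ J)} (hK : ∀ x ∈ K, x ≠ 0 → IsUnit x)
    (hunits : ∀ x : S ⧸ J, IsUnit x → x ∈ K) (s : S) :
    s ∈ (K.comap (Ideal.Quotient.mk J) : Set S) \ (J : Set S) ↔ IsUnit (Ideal.Quotient.mk J s) := by
  have := Ideal.Quotient.nontrivial_iff.mpr hJ
  rw [Set.mem_sdiff, SetLike.mem_coe, SetLike.mem_coe, Subring.mem_comap,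
    ← Ideal.Quotient.eq_zero_iff_mem]
  exact ⟨fun ⟨hsK, hs0⟩ => hK _ hsK hs0, fun hu => ⟨hunits _ hu, hu.ne_zero⟩⟩

theorem saturated_multiplicative_complement_general {S : Type*} [CommRing S]
    (k : Subring S) (hk : (k : Set S) = {s : S | IsUnit s ∨ s = 0})
    (J : Ideal S) (hJ : J.IsPrime)
    (hunits : ∀ x : S ⧸ J, IsUnit x → x ∈ k.map (Ideal.Quotient.mk J))
    (R : Subring S) (hR : R = (k.map (Ideal.Quotient.mk J)).comap (Ideal.Quotient.mk J))
    (W : Set S) (hW : W = (R : Set S) \ (J : Set S)) :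
    (1 : S) ∈ W ∧ (∀ a ∈ W, ∀ b ∈ W, a * b ∈ W) ∧
      (∀ s s' : S, s * s' ∈ W → s ∈ W) := by
  have hW_units : W = {s | IsUnit (Ideal.Quotient.mk J s)} := by
    ext s
    rw [hW, hR]
    exact Ideal.mem_comap_mk_diff_iff_isUnit hJ.ne_top
      (fun _ hx hx0 => Subring.isUnit_of_mem_map_of_ne_zero _ hk hx hx0) hunits s
  subst hW_units
  refine ⟨by simp, fun a ha b hb => ?_, fun s s' h => ?_⟩
  · simpa only [Set.mem_ofPred_eq, map_mul] using ha.mul hb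
  · exact isUnit_of_mul_isUnit_left (by simpa only [Set.mem_ofPred_eq, map_mul] using h)

/-- Let `S` be a domain whose units together with `0` form a subfield `k`,
and `J` a prime ideal of `S` such that every unit of `S/J` lies in the image of `k`.  If `R`
is the pullback of `k → S/J ← S` (i.e. `R = k + J`), then `W = R ∖ J` is a saturated
multiplicatively closed subset of `S`. -/
theorem saturated_multiplicative_complement {S : Type*} [CommRing S] [IsDomain S]
    (k : Subring S) (hk : (k : Set S) = {s : S | IsUnit s ∨ s = 0}) (hkf : IsField k)
    (J : Ideal S) (hJ : J.IsPrime)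
    (hunits : ∀ x : S ⧸ J, IsUnit x → x ∈ k.map (Ideal.Quotient.mk J))
    (R : Subring S) (hR : R = (k.map (Ideal.Quotient.mk J)).comap (Ideal.Quotient.mk J))
    (W : Set S) (hW : W = (R : Set S) \ (J : Set S)) :
    (1 : S) ∈ W ∧ (∀ a ∈ W, ∀ b ∈ W, a * b ∈ W) ∧
      (∀ s s' : S, s * s' ∈ W → s ∈ W) :=
  saturated_multiplicative_complement_general k hk J hJ hunits R hR W hW
end

section
/- Let S be a generalized Krull domain of Krull dimension greater than 1 such that the set consisting of the units of S together with 0 forms a subfield k of S. Let J be a principal height-one prime ideal of S that is not a maximal ideal of S, and suppose every unit of S/J lies in the image of k in S/J. If R is the pullback of the diagram k → S/J ← S, i.e., R = k + J = {s ∈ S : s + J ∈ image of k}, then R is a perinormal integral domain. -/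
/-!
Let `𝔪` be the maximal ideal of a local going-down overring `T` of `R = k + πS`, `p = 𝔪 ∩ R` and
`M = R ∖ p`. For a height-one prime `t` of `S` with `π ∉ t` and `t ∩ R ⊆ p`, going-down gives a
prime `Q ⊆ 𝔪` of `T` over `t ∩ R`; as `πS ⊆ R`, `πa ∈ Q` iff `a ∈ t`, which forces `T ⊆ S_t`
(`S_t` being a valuation ring) and `T ∩ tS_t ⊆ 𝔪`. Finite character of the generalized Krull
domain `S` then gives `T ⊆ S_M` away from `πS`; if `π ∉ p`, this is `T ⊆ R_p`. If `π ∈ p`, then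
`p = πS ∩ R`, and for `y = w / u ∈ T ∩ S_{πS}` with `u ∈ M` and `w ∉ R` both `y` and `y - u` would
lie in `𝔪`, so `u ∈ 𝔪`. Hence `w ∈ R`, and a descending induction on the power of `π` needed to
bring an element of `T` into `S_{πS}` gives `T ⊆ R_p`.
-/

open IsLocalRing

section LocSubalgebra

variable {S : Type*} (K : Type*) [CommRing S] [Field K] [Algebra S K]

/-- `S_M` realised inside `K`; unlike `Localization.subalgebra` it needs no `M ≤ S⁰`. -/
def locSubalgebra (M : Submonoid S) : Subalgebra S K where
  carrier := {x | ∃ a : S, ∃ s ∈ M, x * algebraMap S K s = algebraMap S K a}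
  mul_mem' := by
    rintro x y ⟨a, s, hs, hx⟩ ⟨b, u, hu, hy⟩
    exact ⟨a * b, s * u, M.mul_mem hs hu, by simp only [map_mul, ← hx, ← hy]; ring⟩
  add_mem' := by
    rintro x y ⟨a, s, hs, hx⟩ ⟨b, u, hu, hy⟩
    exact ⟨a * u + s * b, s * u, M.mul_mem hs hu, by simp only [map_mul, map_add, ← hx, ← hy]; ring⟩
  algebraMap_mem' r := ⟨r, 1, M.one_mem, by simp⟩

variable {K}

theorem mem_locSubalgebra_of_mul_eq {M : Submonoid S} {x : K} {a s : S} (hs : s ∈ M)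
    (h : x * algebraMap S K s = algebraMap S K a) : x ∈ locSubalgebra K M :=
  ⟨a, s, hs, h⟩

end LocSubalgebra

namespace HeightOne

variable {S : Type*} [CommRing S] [IsDomain S] {t : Ideal S}

theorem ne_bot (ht : HeightOne t) : t ≠ ⊥ := by
  rintro rfl
  obtain ⟨_, h⟩ := ht
  exact zero_ne_one ((Order.height_bot (PrimeSpectrum S)).symm.trans h)

theorem eq_of_le (ht : HeightOne t) {q : Ideal S} [hq : q.IsPrime] (hq0 : q ≠ ⊥) (hle : q ≤ t) :
    q = t := by
  obtain ⟨htp, h1⟩ := ht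
  by_contra hne
  have hlt : (⟨q, hq⟩ : PrimeSpectrum S) < ⟨t, htp⟩ :=
    lt_of_le_of_ne hle fun h => hne (congrArg (·.asIdeal) h)
  have hfin : Order.height (⟨q, hq⟩ : PrimeSpectrum S) < ⊤ :=
    (Order.height_mono hlt.le).trans_lt (by simp [h1])
  have h0 : Order.height (⟨q, hq⟩ : PrimeSpectrum S) < 1 := h1 ▸ Order.height_strictMono hlt hfin
  have hmin := Order.height_eq_zero.mp (Order.lt_one_iff.mp h0)
  exact hq0 (congrArg (·.asIdeal) (hmin.eq_bot))

theorem span_singleton_eq_of_mem {π : S} (hJ : HeightOne (Ideal.span {π})) (ht : HeightOne t)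
    (hπt : π ∈ t) : Ideal.span {π} = t :=
  have := hJ.1
  ht.eq_of_le hJ.ne_bot ((Ideal.span_singleton_le_iff_mem t).mpr hπt)

end HeightOne

theorem Ideal.exists_pow_mul_mem_of_mem_minimalPrimes {S : Type*} [CommRing S] {I t : Ideal S}
    (ht : t ∈ I.minimalPrimes) {c : S} (hc : c ∈ t) : ∃ N : ℕ, ∃ s ∉ t, c ^ N * s ∈ I := by
  have := ht.1.1
  by_contra! h
  have hdisj : Disjoint (I : Set S) (Submonoid.powers c ⊔ t.primeCompl : Submonoid S) := by
    refine Set.disjoint_right.mpr fun x hx hxI => ?_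
    obtain ⟨_, ⟨N, rfl⟩, s, hs, rfl⟩ := Submonoid.mem_sup.mp hx
    exact h N s hs hxI
  obtain ⟨P, hP, hIP, hPdisj⟩ := Ideal.exists_le_prime_disjoint I _ hdisj
  have hPt : P ≤ t := fun x hxP => by
    by_contra hxt
    exact Set.disjoint_left.mp hPdisj hxP (Submonoid.mem_sup_right (show x ∈ t.primeCompl from hxt))
  exact Set.disjoint_left.mp hPdisj (ht.2 ⟨hP, hIP⟩ hPt hc)
    (Submonoid.mem_sup_left (Submonoid.mem_powers c))

section Valuation

variable {S K : Type*} [CommRing S] [IsDomain S] [Field K] [Algebra S K] [IsFractionRing S K]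

theorem HeightOne.exists_pow_mul_mem_locSubalgebra {t : Ideal S} [t.IsPrime] (ht : HeightOne t)
    {c : S} (hc : c ∈ t) (x : K) :
    ∃ N : ℕ, algebraMap S K c ^ N * x ∈ locSubalgebra K t.primeCompl := by
  obtain ⟨a, b, hb, rfl⟩ := IsFractionRing.div_surjective (A := S) x
  have hbK : algebraMap S K b ≠ 0 := IsFractionRing.to_map_ne_zero_of_mem_nonZeroDivisors hb
  by_cases hbt : b ∈ t
  · have hmin : t ∈ (Ideal.span {b}).minimalPrimes := by
      refine ⟨⟨‹_›, (Ideal.span_singleton_le_iff_mem t).mpr hbt⟩, fun q ⟨hq, hbq⟩ hqt => ?_⟩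
      refine (ht.eq_of_le (fun h => ?_) hqt).ge
      exact nonZeroDivisors.ne_zero hb
        (by simpa [h] using (Ideal.span_singleton_le_iff_mem q).mp hbq)
    obtain ⟨N, s, hs, hN⟩ := Ideal.exists_pow_mul_mem_of_mem_minimalPrimes hmin hc
    obtain ⟨d, hd⟩ := Ideal.mem_span_singleton'.mp hN
    refine ⟨N, mem_locSubalgebra_of_mul_eq (a := d * a) hs ?_⟩
    rw [← map_pow, mul_div_assoc', div_mul_eq_mul_div, div_eq_iff hbK, ← map_mul, ← map_mul,
      ← map_mul]
    exact congrArg _ (by linear_combination (-a) * hd)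
  · exact ⟨0, mem_locSubalgebra_of_mul_eq hbt (by rw [pow_zero, one_mul, div_mul_cancel₀ _ hbK])⟩

theorem mem_locSubalgebra_or_inv_mem (t : Ideal S) [t.IsPrime]
    [ValuationRing (Localization.AtPrime t)] (x : K) :
    x ∈ locSubalgebra K t.primeCompl ∨ x⁻¹ ∈ locSubalgebra K t.primeCompl := by
  let := IsLocalization.localizationAlgebraOfSubmonoidLe (Localization.AtPrime t) K
    t.primeCompl (nonZeroDivisors S) t.primeCompl_le_nonZeroDivisors
  have := IsLocalization.localization_isScalarTower_of_submonoid_le (Localization.AtPrime t) K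
    t.primeCompl (nonZeroDivisors S) t.primeCompl_le_nonZeroDivisors
  have := IsFractionRing.isFractionRing_of_isDomain_of_isLocalization t.primeCompl
    (Localization.AtPrime t) K
  have hrange : ∀ y : Localization.AtPrime t,
      algebraMap (Localization.AtPrime t) K y ∈ locSubalgebra K t.primeCompl := fun y => by
    obtain ⟨⟨a, s⟩, h⟩ := IsLocalization.surj t.primeCompl y
    refine mem_locSubalgebra_of_mul_eq (a := a) s.2 ?_
    rw [IsScalarTower.algebraMap_apply S (Localization.AtPrime t) K,
      IsScalarTower.algebraMap_apply S (Localization.AtPrime t) K a, ← map_mul, h]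
  rcases ValuationRing.isInteger_or_isInteger (Localization.AtPrime t) x with ⟨y, hy⟩ | ⟨y, hy⟩
  · exact .inl (hy ▸ hrange y)
  · exact .inr (hy ▸ hrange y)

end Valuation

namespace IsGenKrull

variable {S K : Type*} [CommRing S] [IsDomain S] [Field K] [Algebra S K] [IsFractionRing S K]

theorem exists_algebraMap_eq (hS : IsGenKrull S) {x : K}
    (hx : ∀ (t : Ideal S) [t.IsPrime], HeightOne t → x ∈ locSubalgebra K t.primeCompl) :
    ∃ r : S, algebraMap S K r = x := by
  let e := (FractionRing.algEquiv S K).symm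
  obtain ⟨r, hr⟩ := hS.1 (e x) fun t ht h1 => by
    obtain ⟨a, s, hs, h⟩ := hx t ⟨ht, h1⟩
    exact ⟨a, s, hs, by rw [← e.commutes s, ← e.commutes a, ← map_mul, h]⟩
  exact ⟨r, e.injective (by rw [e.commutes, hr])⟩

/-- Finite character: the finitely many height-one primes that contain a denominator of `x` and
meet `M` are cleared by a single element of `M`. -/
theorem mem_locSubalgebra_of_forall_disjoint (hS : IsGenKrull S) (M : Submonoid S) {x : K}
    (hx : ∀ (t : Ideal S) [t.IsPrime], HeightOne t → Disjoint (t : Set S) M →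
      x ∈ locSubalgebra K t.primeCompl) :
    x ∈ locSubalgebra K M := by
  classical
  obtain ⟨a, b, hb, rfl⟩ := IsFractionRing.div_surjective (A := S) x
  have hbK : algebraMap S K b ≠ 0 := IsFractionRing.to_map_ne_zero_of_mem_nonZeroDivisors hb
  have hclear : ∀ t : Ideal S, ∃ m ∈ M, ∀ [t.IsPrime], HeightOne t → ¬ Disjoint (t : Set S) M →
      algebraMap S K m * (algebraMap S K a / algebraMap S K b) ∈ locSubalgebra K t.primeCompl := by
    intro t
    by_cases h : ∃ c ∈ M, c ∈ t ∧ HeightOne t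
    · obtain ⟨c, hcM, hct, ht⟩ := h
      have := ht.1
      obtain ⟨N, hN⟩ :=
        ht.exists_pow_mul_mem_locSubalgebra hct (algebraMap S K a / algebraMap S K b)
      exact ⟨c ^ N, pow_mem hcM N, fun _ _ => by rwa [map_pow]⟩
    · refine ⟨1, M.one_mem, fun ht hd => absurd ?_ h⟩
      obtain ⟨c, hct, hcM⟩ := Set.not_disjoint_iff.mp hd
      exact ⟨c, hcM, hct, ht⟩
  choose! g hgM hg using hclear
  let F := (hS.2.1 b (nonZeroDivisors.ne_zero hb)).toFinset
  obtain ⟨r, hr⟩ := hS.exists_algebraMap_eq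
    (x := algebraMap S K (∏ t ∈ F, g t) * (algebraMap S K a / algebraMap S K b)) fun t _ ht => by
    by_cases hd : Disjoint (t : Set S) M
    · exact Subalgebra.mul_mem _ (Subalgebra.algebraMap_mem _ _) (hx t ht hd)
    by_cases hbt : b ∈ t
    · have htF : t ∈ F := by
        obtain ⟨htp, h1⟩ := ht
        exact (Set.Finite.mem_toFinset _).mpr ⟨htp, h1, hbt⟩
      rw [← Finset.mul_prod_erase F g htF, map_mul, mul_right_comm]
      exact Subalgebra.mul_mem _ (hg t ht hd) (Subalgebra.algebraMap_mem _ _)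
    · exact Subalgebra.mul_mem _ (Subalgebra.algebraMap_mem _ _)
        (mem_locSubalgebra_of_mul_eq hbt (div_mul_cancel₀ _ hbK))
  exact mem_locSubalgebra_of_mul_eq (prod_mem fun t _ => hgM t) (by rw [mul_comm, hr])

theorem exists_heightOne_mem_disjoint (hS : IsGenKrull S) (M : Submonoid S) {w : S} (hw : w ≠ 0)
    (hwM : ∀ m ∈ M, ¬ w ∣ m) : ∃ t : Ideal S, HeightOne t ∧ w ∈ t ∧ Disjoint (t : Set S) M := by
  by_contra! h
  have hwK : algebraMap S (FractionRing S) w ≠ 0 :=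
    (map_ne_zero_iff _ (IsFractionRing.injective S _)).mpr hw
  obtain ⟨a, m, hm, hwm⟩ := hS.mem_locSubalgebra_of_forall_disjoint M
    (x := (algebraMap S (FractionRing S) w)⁻¹) fun t _ ht hd =>
      mem_locSubalgebra_of_mul_eq (a := 1) (fun hwt => h t ht hwt hd) (by simp [hwK])
  refine hwM m hm ⟨a, IsFractionRing.injective S (FractionRing S) ?_⟩
  rw [map_mul, ← hwm, mul_inv_cancel_left₀ hwK]

end IsGenKrull

theorem GoingDownHom.exists_comap_eq {A B : Type*} [CommRing A] [CommRing B] [IsLocalRing B]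
    {f : A →+* B} (hf : GoingDownHom f) {q : Ideal A} [hq : q.IsPrime]
    (hle : q ≤ (maximalIdeal B).comap f) : ∃ Q : Ideal B, Q.IsPrime ∧ Q.comap f = q :=
  have hm := (maximalIdeal.isMaximal B).isPrime
  let ⟨Q, hQ, _, hQq⟩ := hf q _ hq (hm.comap f) hle _ hm rfl
  ⟨Q, hQ, hQq⟩

theorem mem_of_mul_eq_of_notMem_comap {A K : Type*} [CommRing A] [Field K] {T : Subring K}
    [IsLocalRing T] (f : A →+* T) {x : K} {r s : A} (hs : s ∉ (maximalIdeal T).comap f)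
    (h : x * (f s : K) = f r) : x ∈ T := by
  obtain ⟨u, hu⟩ : IsUnit (f s) := by
    simpa [Ideal.mem_comap, mem_maximalIdeal, mem_nonunits_iff] using hs
  have hinv : (f s : K) * ((u⁻¹ : Tˣ) : T) = 1 := by
    rw [← hu]; exact congrArg Subtype.val u.mul_inv
  have hx : x = ((f r * (u⁻¹ : Tˣ) : T) : K) := by
    rw [Subring.coe_mul, ← h, mul_assoc, hinv, mul_one]
  exact hx ▸ SetLike.coe_mem _

theorem mul_mem_iff_of_comap_eq {S B : Type*} [CommRing S] [CommRing B] {R : Subring S}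
    {f : R →+* B} {π : S} (hπR : ∀ s, π * s ∈ R) {Q : Ideal B} {t : Ideal S} [t.IsPrime]
    (hQ : Q.comap f = t.comap R.subtype) (hπt : π ∉ t) (a : S) :
    f ⟨π * a, hπR a⟩ ∈ Q ↔ a ∈ t := by
  rw [← Ideal.mem_comap, hQ, Ideal.mem_comap]
  exact Ideal.IsPrime.mul_mem_left_iff hπt

section Overring

variable {S K : Type*} [CommRing S] [Field K] [Algebra S K]
  {R : Subring S} {T : Subring K} {f : R →+* T} (hf : ∀ r : R, (f r : K) = algebraMap S K r)
  {π : S} (hπR : ∀ s, π * s ∈ R)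

include hf hπR

theorem mem_maximalIdeal_of_goingDown [IsLocalRing T] (hgd : GoingDownHom f) {t : Ideal S}
    [t.IsPrime] (hπt : π ∉ t) (htp : t.comap R.subtype ≤ (maximalIdeal T).comap f) {x : K}
    (hx : x ∈ T) {a s : S} (ha : a ∈ t) (hs : s ∉ t) (h : x * algebraMap S K s = algebraMap S K a) :
    ⟨x, hx⟩ ∈ maximalIdeal T := by
  obtain ⟨Q, hQ, hQt⟩ := hgd.exists_comap_eq htp
  have key : ⟨x, hx⟩ * f ⟨π * s, hπR s⟩ = f ⟨π * a, hπR a⟩ :=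
    Subtype.ext (by simp only [Subring.coe_mul, hf, map_mul, ← h]; ring)
  have hxQ : ⟨x, hx⟩ * f ⟨π * s, hπR s⟩ ∈ Q :=
    key ▸ (mul_mem_iff_of_comap_eq hπR hQt hπt a).mpr ha
  exact le_maximalIdeal hQ.ne_top ((hQ.mem_or_mem hxQ).resolve_right
    (mt (mul_mem_iff_of_comap_eq hπR hQt hπt s).mp hs))

theorem mem_locSubalgebra_of_goingDown [IsDomain S] [IsFractionRing S K] [IsLocalRing T]
    (hgd : GoingDownHom f) {t : Ideal S} [t.IsPrime] [ValuationRing (Localization.AtPrime t)]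
    (hπt : π ∉ t) (htp : t.comap R.subtype ≤ (maximalIdeal T).comap f) {x : K} (hx : x ∈ T) :
    x ∈ locSubalgebra K t.primeCompl := by
  rcases mem_locSubalgebra_or_inv_mem t x with h | ⟨c, s, hs, h⟩
  · exact h
  rcases eq_or_ne x 0 with rfl | hx0
  · exact zero_mem _
  have h' : x * algebraMap S K c = algebraMap S K s := by
    rw [← h, mul_inv_cancel_left₀ hx0]
  refine mem_locSubalgebra_of_mul_eq (fun hc => hs ?_) h'
  obtain ⟨Q, hQ, hQt⟩ := hgd.exists_comap_eq htp
  have key : f ⟨π * s, hπR s⟩ = ⟨x, hx⟩ * f ⟨π * c, hπR c⟩ :=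
    Subtype.ext (by simp only [Subring.coe_mul, hf, map_mul, ← h']; ring)
  exact (mul_mem_iff_of_comap_eq hπR hQt hπt s).mp
    (key ▸ Q.mul_mem_left _ ((mul_mem_iff_of_comap_eq hπR hQt hπt c).mpr hc))

end Overring

theorem exists_algebra_isFractionRing {S : Type*} [CommRing S] [IsDomain S] {R : Subring S}
    {π : S} (hπ0 : π ≠ 0) (hπR : ∀ s, π * s ∈ R) :
    ∃ _ : Algebra S (FractionRing R), IsFractionRing S (FractionRing R) ∧
      ∀ r : R, algebraMap S (FractionRing R) r = algebraMap R (FractionRing R) r := by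
  have hinj : Function.Injective (algebraMap R (FractionRing S)) :=
    (IsFractionRing.injective S (FractionRing S)).comp Subtype.val_injective
  have : FaithfulSMul R (FractionRing S) := (faithfulSMul_iff_algebraMap_injective _ _).mpr hinj
  have : IsFractionRing R (FractionRing S) := IsFractionRing.of_field _ _ fun z => by
    obtain ⟨a, b, -, rfl⟩ := IsFractionRing.div_surjective (A := S) z
    have hπK : algebraMap S (FractionRing S) π ≠ 0 :=
      (map_ne_zero_iff _ (IsFractionRing.injective S _)).mpr hπ0
    refine ⟨⟨π * a, hπR a⟩, ⟨π * b, hπR b⟩, ?_⟩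
    show _ = algebraMap S _ (π * a) / algebraMap S _ (π * b)
    rw [map_mul, map_mul, mul_div_mul_left _ _ hπK]
  let e := (FractionRing.algEquiv R (FractionRing S)).symm
  let inst : Algebra S (FractionRing R) :=
    (e.toRingHom.comp (algebraMap S (FractionRing S))).toAlgebra
  refine ⟨inst, IsLocalization.isLocalization_of_algEquiv (nonZeroDivisors S)
    (AlgEquiv.ofRingEquiv (f := e.toRingEquiv) fun _ => rfl), fun r => ?_⟩
  show e (algebraMap S (FractionRing S) r) = _
  rw [← e.commutes r]
  rfl

theorem comap_span_singleton_eq {S : Type*} [CommRing S] {R : Subring S} {π : S}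
    (hR : ∀ s, s ∈ R ↔ IsUnit (Ideal.Quotient.mk (Ideal.span {π}) s) ∨
      Ideal.Quotient.mk (Ideal.span {π}) s = 0)
    (hπR : ∀ s, π * s ∈ R) {p : Ideal R} [hp : p.IsPrime] (hπ : π ∈ R) (hπp : ⟨π, hπ⟩ ∈ p) :
    (Ideal.span {π}).comap R.subtype = p := by
  have hle : (Ideal.span {π}).comap R.subtype ≤ p := fun r hr => by
    obtain ⟨c, hc⟩ := Ideal.mem_span_singleton'.mp hr
    have hrr : r * r = ⟨π, hπ⟩ * ⟨π * (c * c), hπR _⟩ :=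
      Subtype.ext (by simp only [Subring.coe_mul, Subring.subtype_apply] at hc ⊢; rw [← hc]; ring)
    exact (hp.mul_mem_iff_mem_or_mem.mp (hrr ▸ p.mul_mem_right _ hπp)).elim id id
  refine le_antisymm hle fun r hrp => by_contra fun hrJ => ?_
  obtain ⟨v, hv⟩ := (((hR r).mp r.2).resolve_right
    (mt Ideal.Quotient.eq_zero_iff_mem.mp hrJ)).exists_left_inv
  obtain ⟨v, rfl⟩ := Ideal.Quotient.mk_surjective v
  have hvR : v ∈ R := (hR v).mpr (.inl (IsUnit.of_mul_eq_one _ hv))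
  have h1 : (⟨v, hvR⟩ * r - 1 : R) ∈ (Ideal.span {π}).comap R.subtype := by
    rw [Ideal.mem_comap, ← Ideal.Quotient.eq_zero_iff_mem]
    simp [hv]
  exact hp.ne_top ((Ideal.eq_top_iff_one _).mpr
    (by simpa using p.sub_mem (p.mul_mem_left ⟨v, hvR⟩ hrp) (hle h1)))

theorem comap_le_of_disjoint_primeCompl_map {S : Type*} [CommRing S] {R : Subring S} {t : Ideal S}
    {p : Ideal R} [p.IsPrime] (hd : Disjoint (t : Set S) (p.primeCompl.map R.subtype)) :
    t.comap R.subtype ≤ p := fun z hzt => by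
  by_contra hzp
  exact Set.disjoint_left.mp hd hzt ⟨z, hzp, rfl⟩

section Pullback

variable {S K : Type*} [CommRing S] [IsDomain S] [Field K] [Algebra S K] [IsFractionRing S K]
  {R : Subring S} {T : Subring K} [IsLocalRing T] {f : R →+* T}
  (hf : ∀ r : R, (f r : K) = algebraMap S K r) {π : S} (hπR : ∀ s, π * s ∈ R)
  (hS : IsGenKrull S) (hgd : GoingDownHom f)

include hf hπR hS hgd

theorem IsGenKrull.mem_locSubalgebra_primeCompl_map {y : K} (hy : y ∈ T)
    (hyπ : ∀ (t : Ideal S) [t.IsPrime], HeightOne t → π ∈ t →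
      t.comap R.subtype ≤ (maximalIdeal T).comap f → y ∈ locSubalgebra K t.primeCompl) :
    y ∈ locSubalgebra K (((maximalIdeal T).comap f).primeCompl.map R.subtype) := by
  have := (maximalIdeal.isMaximal T).isPrime.comap f
  refine hS.mem_locSubalgebra_of_forall_disjoint _ fun t _ ht hd => ?_
  have htp := comap_le_of_disjoint_primeCompl_map hd
  by_cases hπt : π ∈ t
  · exact hyπ t ht hπt htp
  · have := hS.2.2 t ht.1 ht.2
    exact mem_locSubalgebra_of_goingDown hf hπR hgd hπt htp hy

theorem exists_mul_eq_of_notMem_comap (hπ : π ∈ R) (hπp : ⟨π, hπ⟩ ∉ (maximalIdeal T).comap f)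
    {x : K} (hx : x ∈ T) : ∃ a s : R, s ∉ (maximalIdeal T).comap f ∧
      x * algebraMap S K s = algebraMap S K a := by
  have hp := (maximalIdeal.isMaximal T).isPrime.comap f
  obtain ⟨a, _, ⟨s, hs, rfl⟩, h⟩ := hS.mem_locSubalgebra_primeCompl_map hf hπR hgd hx
    fun t _ _ hπt htp => absurd (htp (show (⟨π, hπ⟩ : R) ∈ t.comap R.subtype from hπt)) hπp
  refine ⟨⟨π * a, hπR a⟩, ⟨π, hπ⟩ * s, fun h => (hp.mem_or_mem h).elim hπp hs, ?_⟩
  simp only [Subring.coe_mul, Subring.subtype_apply, map_mul] at h ⊢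
  rw [← h]
  ring

variable (hR : ∀ s, s ∈ R ↔ IsUnit (Ideal.Quotient.mk (Ideal.span {π}) s) ∨
  Ideal.Quotient.mk (Ideal.span {π}) s = 0) (hJ : HeightOne (Ideal.span {π}))

include hR hJ

omit [IsFractionRing S K] in
theorem mem_maximalIdeal_of_mul_eq_of_notMem (hπ : π ∈ R)
    (hπp : ⟨π, hπ⟩ ∈ (maximalIdeal T).comap f) {u : R} (hu : u ∉ (maximalIdeal T).comap f)
    {z : K} (hz : z ∈ T) {w : S} (h : z * algebraMap S K u = algebraMap S K w) (hwR : w ∉ R) :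
    ⟨z, hz⟩ ∈ maximalIdeal T := by
  have := (maximalIdeal.isMaximal T).isPrime.comap f
  have hwM : ∀ m ∈ ((maximalIdeal T).comap f).primeCompl.map R.subtype, ¬ w ∣ m := by
    rintro _ ⟨m, hm, rfl⟩ hwm
    refine hwR ((hR w).mpr (.inl (isUnit_of_dvd_unit (map_dvd _ hwm) ?_)))
    refine ((hR m).mp m.2).resolve_right fun h0 => hm ?_
    rw [← comap_span_singleton_eq hR hπR hπ hπp]
    exact Ideal.mem_comap.mpr (Ideal.Quotient.eq_zero_iff_mem.mp h0)
  obtain ⟨t, ht, hwt, hd⟩ :=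
    hS.exists_heightOne_mem_disjoint _ (by rintro rfl; exact hwR R.zero_mem) hwM
  have := ht.1
  have hπt : π ∉ t := fun hπt => hwR ((hR w).mpr (.inr (Ideal.Quotient.eq_zero_iff_mem.mpr
    (hJ.span_singleton_eq_of_mem ht hπt ▸ hwt))))
  exact mem_maximalIdeal_of_goingDown hf hπR hgd hπt (comap_le_of_disjoint_primeCompl_map hd)
    hz hwt (fun hut => Set.disjoint_left.mp hd hut ⟨u, hu, rfl⟩) h

variable [(Ideal.span {π}).IsPrime]

theorem exists_mul_eq_of_mem_locSubalgebra (hπ : π ∈ R) (hπp : ⟨π, hπ⟩ ∈ (maximalIdeal T).comap f)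
    {y : K} (hy : y ∈ T) (hyJ : y ∈ locSubalgebra K (Ideal.span {π}).primeCompl) :
    ∃ a s : R, s ∉ (maximalIdeal T).comap f ∧ y * algebraMap S K s = algebraMap S K a := by
  obtain ⟨w, _, ⟨u, hu, rfl⟩, hyu⟩ := hS.mem_locSubalgebra_primeCompl_map hf hπR hgd hy
    fun t _ ht hπt _ => by obtain rfl := hJ.span_singleton_eq_of_mem ht hπt; exact hyJ
  change y * algebraMap S K u = algebraMap S K w at hyu
  refine ⟨⟨w, by_contra fun hwR => hu ?_⟩, u, hu, hyu⟩
  have huT : algebraMap S K u ∈ T := hf u ▸ (f u).2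
  -- `y - u = (w - u²) / u` with `w - u² ∉ R`
  have hy0 := mem_maximalIdeal_of_mul_eq_of_notMem hf hπR hS hgd hR hJ hπ hπp hu hy hyu hwR
  have hy1 := mem_maximalIdeal_of_mul_eq_of_notMem hf hπR hS hgd hR hJ hπ hπp hu
    (T.sub_mem hy huT) (w := w - u * u) (by rw [sub_mul, hyu, map_sub, map_mul])
    fun h => hwR (by simpa using R.add_mem h (R.mul_mem u.2 u.2))
  have hfu : f u = ⟨y, hy⟩ - ⟨y - algebraMap S K u, T.sub_mem hy huT⟩ :=
    Subtype.ext (by simp [hf])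
  change f u ∈ maximalIdeal T
  rw [hfu]
  exact sub_mem hy0 hy1

theorem exists_mul_eq_of_mem_comap (hπ : π ∈ R) (hπp : ⟨π, hπ⟩ ∈ (maximalIdeal T).comap f)
    {x : K} (hx : x ∈ T) : ∃ a s : R, s ∉ (maximalIdeal T).comap f ∧
      x * algebraMap S K s = algebraMap S K a := by
  have hpJ := comap_span_singleton_eq hR hπR hπ hπp
  have hπT : algebraMap S K π ∈ T := hf ⟨π, hπ⟩ ▸ (f _).2
  have hπK : algebraMap S K π ≠ 0 := (map_ne_zero_iff _ (IsFractionRing.injective S K)).mpr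
    fun h => hJ.ne_bot (Ideal.span_singleton_eq_bot.mpr h)
  obtain ⟨n, hn⟩ := hJ.exists_pow_mul_mem_locSubalgebra (Ideal.mem_span_singleton_self π) x
  induction n with
  | zero =>
    exact exists_mul_eq_of_mem_locSubalgebra hf hπR hS hgd hR hJ hπ hπp hx (by simpa using hn)
  | succ n ih =>
    obtain ⟨a, s, hs, h⟩ := exists_mul_eq_of_mem_locSubalgebra hf hπR hS hgd hR hJ hπ hπp
      (T.mul_mem (T.pow_mem hπT _) hx) hn
    by_cases ha : a ∈ (maximalIdeal T).comap f
    · rw [← hpJ, Ideal.mem_comap] at ha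
      obtain ⟨c, hc⟩ := Ideal.mem_span_singleton'.mp ha
      refine ih (mem_locSubalgebra_of_mul_eq (a := c) (s := s) (fun hsJ => hs (hpJ ▸ hsJ))
        (mul_right_cancel₀ hπK ?_))
      rw [← map_mul, hc, Subring.coe_subtype, ← h]
      ring
    · have key : f a = f ⟨π, hπ⟩ ^ (n + 1) * (⟨x, hx⟩ * f s) :=
        Subtype.ext (by simp only [Subring.coe_mul, SubmonoidClass.coe_pow, hf, ← h]; ring)
      have hua : IsUnit (f a) := by simpa [mem_maximalIdeal, mem_nonunits_iff] using ha
      rw [key] at hua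
      exact absurd (isUnit_pow_succ_iff.mp (isUnit_of_mul_isUnit_left hua))
        (by simpa [mem_maximalIdeal, mem_nonunits_iff] using hπp)

end Pullback

theorem mem_comap_map_mk_iff {S : Type*} [CommRing S] {k : Subring S}
    (hk : (k : Set S) = {s : S | IsUnit s ∨ s = 0}) {J : Ideal S}
    (hunits : ∀ x : S ⧸ J, IsUnit x → x ∈ k.map (Ideal.Quotient.mk J)) (s : S) :
    s ∈ (k.map (Ideal.Quotient.mk J)).comap (Ideal.Quotient.mk J) ↔
      IsUnit (Ideal.Quotient.mk J s) ∨ Ideal.Quotient.mk J s = 0 := by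
  refine ⟨fun ⟨a, ha, hs⟩ => ?_, fun h => h.elim (hunits _) fun h0 => ?_⟩
  · have ha : a ∈ (k : Set S) := ha
    rw [hk] at ha
    rcases ha with hu | rfl
    · exact .inl (hs ▸ hu.map _)
    · exact .inr (by rw [← hs, map_zero])
  · exact Subring.mem_comap.mpr (h0 ▸ zero_mem _)

theorem perinormal_hypersurface_contraction_general {S : Type*} [CommRing S] [IsDomain S]
    (hS : IsGenKrull S)
    (k : Subring S) (hk : (k : Set S) = {s : S | IsUnit s ∨ s = 0})
    (J : Ideal S) (hJ : J.IsPrime) (hJprinc : J.IsPrincipal)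
    (hJht : Order.height (⟨J, hJ⟩ : PrimeSpectrum S) = 1)
    (hunits : ∀ x : S ⧸ J, IsUnit x → x ∈ k.map (Ideal.Quotient.mk J))
    (R : Subring S) (hR : R = (k.map (Ideal.Quotient.mk J)).comap (Ideal.Quotient.mk J)) :
    PerinormalDomain R := by
  obtain ⟨π, rfl⟩ : ∃ π, J = Ideal.span {π} := ⟨_, J.span_singleton_generator.symm⟩
  have hJ1 : HeightOne (Ideal.span {π}) := ⟨hJ, hJht⟩
  have hRJ := hR ▸ mem_comap_map_mk_iff hk hunits
  have hπR : ∀ s, π * s ∈ R := fun s => (hRJ _).mpr (.inr (Ideal.Quotient.eq_zero_iff_mem.mpr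
    (Ideal.mul_mem_right s _ (Ideal.mem_span_singleton_self π))))
  have hπ : π ∈ R := by simpa using hπR 1
  obtain ⟨_, _, hRS⟩ := exists_algebra_isFractionRing (fun h => hJ1.ne_bot (by simp [h])) hπR
  intro T hT _ hgd
  set f := (algebraMap R (FractionRing R)).codRestrict T fun x => hT ⟨x, rfl⟩
  have hf : ∀ r : R, (f r : FractionRing R) = algebraMap S (FractionRing R) r :=
    fun r => (hRS r).symm
  refine ⟨_, (maximalIdeal.isMaximal T).isPrime.comap f, Set.ext fun x =>
    ⟨fun hx => ?_, fun ⟨r, s, hs, h⟩ => mem_of_mul_eq_of_notMem_comap f hs h⟩⟩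
  obtain ⟨a, s, hs, h⟩ : ∃ a s : R, s ∉ (maximalIdeal T).comap f ∧
      x * algebraMap S (FractionRing R) s = algebraMap S (FractionRing R) a := by
    by_cases hπp : ⟨π, hπ⟩ ∈ (maximalIdeal T).comap f
    · exact exists_mul_eq_of_mem_comap hf hπR hS hgd hRJ hJ1 hπ hπp hx
    · exact exists_mul_eq_of_notMem_comap hf hπR hS hgd hπ hπp hx
  exact ⟨a, s, hs, by rwa [← hRS, ← hRS]⟩

/-- **hypersurface contraction.**  Let `S` be a generalized Krull domain of
Krull dimension `> 1` whose units together with `0` form a subfield `k`.  Let `J` be a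
principal height-one prime ideal of `S` which is not maximal, and suppose every unit of `S/J`
lies in the image of `k`.  Then the pullback `R = k + J` of `k → S/J ← S` is a perinormal
integral domain. -/
theorem perinormal_hypersurface_contraction {S : Type*} [CommRing S] [IsDomain S]
    (hS : IsGenKrull S) (hdim : 1 < ringKrullDim S)
    (k : Subring S) (hk : (k : Set S) = {s : S | IsUnit s ∨ s = 0}) (hkf : IsField k)
    (J : Ideal S) (hJ : J.IsPrime) (hJprinc : J.IsPrincipal)
    (hJht : Order.height (⟨J, hJ⟩ : PrimeSpectrum S) = 1) (hJmax : ¬ J.IsMaximal)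
    (hunits : ∀ x : S ⧸ J, IsUnit x → x ∈ k.map (Ideal.Quotient.mk J))
    (R : Subring S) (hR : R = (k.map (Ideal.Quotient.mk J)).comap (Ideal.Quotient.mk J)) :
    PerinormalDomain R :=
  perinormal_hypersurface_contraction_general hS k hk J hJ hJprinc hJht hunits R hR
end

section
/- Let A be an integral domain contained in a field K. If A is perinormal in K, then K is the fraction field of A (and hence A is a perinormal domain). -/
open IsLocalRing

section GoingDown

variable {R S T : Type*} [CommRing R] [CommRing S] [CommRing T]

theorem GoingDownHom.ringEquiv_comp {f : R →+* S} (hf : GoingDownHom f) (e : S ≃+* T) :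
    GoingDownHom ((e : S →+* T).comp f) := by
  intro p₁ p₂ hp₁ hp₂ hle Q₂ hQ₂ hQ₂p
  obtain ⟨Q₁, hQ₁, hQ₁Q₂, hQ₁p⟩ := hf p₁ p₂ hp₁ hp₂ hle (Q₂.comap (e : S →+* T)) (hQ₂.comap _)
    (by rwa [Ideal.comap_comap])
  refine ⟨Q₁.comap (e.symm : T →+* S), hQ₁.comap _, ?_, ?_⟩
  · calc Q₁.comap (e.symm : T →+* S)
        ≤ (Q₂.comap (e : S →+* T)).comap (e.symm : T →+* S) := Ideal.comap_mono hQ₁Q₂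
      _ = Q₂ := by
        rw [Ideal.comap_comap, RingEquiv.comp_symm, Ideal.comap_id]
  · rwa [Ideal.comap_comap, ← RingHom.comp_assoc, RingEquiv.symm_comp, RingHom.id_comp]

theorem GoingDownHom.of_comp_algebraMap [Algebra R S] (M : Submonoid R) [IsLocalization M S]
    {f : S →+* T} (hf : GoingDownHom (f.comp (algebraMap R S))) : GoingDownHom f := by
  intro p₁ p₂ hp₁ hp₂ hle Q₂ hQ₂ hQ₂p
  obtain ⟨Q₁, hQ₁, hQ₁Q₂, hQ₁p⟩ := hf (p₁.under R) (p₂.under R) (hp₁.comap _) (hp₂.comap _)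
    (Ideal.comap_mono hle) Q₂ hQ₂ (by rw [← Ideal.comap_comap, hQ₂p])
  exact ⟨Q₁, hQ₁, hQ₁Q₂, (IsLocalization.orderEmbedding M S).injective
    (by simpa [IsLocalization.orderEmbedding, Ideal.comap_comap] using hQ₁p)⟩

theorem goingDownHom_of_injective_of_isField {f : R →+* S} (hf : Function.Injective f)
    (hS : IsField S) : GoingDownHom f := by
  have := hS.nontrivial
  intro p₁ p₂ hp₁ hp₂ hle Q₂ hQ₂ hQ₂p
  have hQ₂_bot : Q₂ = ⊥ := by_contra fun h ↦ Ring.not_isField_of_ne_of_ne h hQ₂.ne_top hS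
  have hp₂_bot : p₂ = ⊥ := by rw [← hQ₂p, hQ₂_bot, Ideal.comap_bot_of_injective f hf]
  have hp₁_bot : p₁ = ⊥ := le_bot_iff.mp (hp₂_bot ▸ hle)
  exact ⟨Q₂, hQ₂, le_rfl, by rw [hQ₂p, hp₂_bot, hp₁_bot]⟩

end GoingDown

section Localization

variable {R S P : Type*} [CommRing R] [CommRing S] [CommRing P] [Algebra R S]
  (M : Submonoid R) [IsLocalization M S]

theorem IsLocalization.mem_range_iff (φ : S →+* P) {x : P} :
    x ∈ φ.range ↔ ∃ (r : R) (s : M), x * φ (algebraMap R S s) = φ (algebraMap R S r) := by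
  constructor
  · rintro ⟨y, rfl⟩
    obtain ⟨⟨r, s⟩, rfl⟩ := IsLocalization.mk'_surjective M y
    exact ⟨r, s, by rw [← map_mul, IsLocalization.mk'_spec]⟩
  · rintro ⟨r, s, hx⟩
    refine ⟨IsLocalization.mk' S r s, ((IsLocalization.map_units S s).map φ).mul_right_cancel ?_⟩
    rw [← map_mul, IsLocalization.mk'_spec, hx]

theorem IsLocalization.range_le_of_comp_algebraMap {φ : S →+* P} {T : Subring P} (g : R →+* T)
    (hg : T.subtype.comp g = φ.comp (algebraMap R S)) (hunit : ∀ s : M, IsUnit (g s)) :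
    φ.range ≤ T := by
  have hφ : φ = T.subtype.comp (IsLocalization.lift hunit) :=
    IsLocalization.ringHom_ext M (by rw [RingHom.comp_assoc, IsLocalization.lift_comp, hg])
  rintro _ ⟨x, rfl⟩
  rw [hφ]
  exact (IsLocalization.lift hunit x).2

end Localization

section Perinormal

variable {B : Type*} [CommRing B] (A : Subring B)

theorem locMap_algebraMap (W : Submonoid A) (a : A) :
    locMap A W (algebraMap A (Localization W) a) =
      algebraMap B (Localization (W.map A.subtype)) a :=
  IsLocalization.lift_eq _ a

variable {A}

theorem PerinormalIn.eq_range_locMap (h : PerinormalIn A) (p : Ideal A) [p.IsPrime]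
    (T : Subring (Localization (p.primeCompl.map A.subtype))) [IsLocalRing T] (g : A →+* T)
    (hg : ∀ a : A, (g a : Localization (p.primeCompl.map A.subtype)) = algebraMap B _ a)
    (hmax : (maximalIdeal T).comap g = p) (hgd : GoingDownHom g) :
    T = (locMap A p.primeCompl).range := by
  have hunit (s : p.primeCompl) : IsUnit (g s) := by
    by_contra hs
    exact s.2 (hmax.le ((mem_maximalIdeal _).mpr hs))
  have hle : (locMap A p.primeCompl).range ≤ T :=
    IsLocalization.range_le_of_comp_algebraMap p.primeCompl g
      (by ext a; simp [hg, locMap_algebraMap]) hunit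
  set f := (locMap A p.primeCompl).codRestrict T fun x ↦ hle ⟨x, rfl⟩
  have hfg : f.comp (algebraMap A (Localization.AtPrime p)) = g := by
    ext a
    simp [f, hg, locMap_algebraMap]
  refine h p inferInstance T hle inferInstance (fun M hM ↦ ?_)
    (.of_comp_algebraMap p.primeCompl (hfg ▸ hgd))
  rw [← Localization.AtPrime.eq_maximalIdeal_iff_under_eq, eq_maximalIdeal hM,
    Ideal.under, Ideal.comap_comap, hfg, hmax]

end Perinormal

section Field

variable {K : Type*} [Field K] {A : Subring K}

theorem Ideal.primeCompl_map_subtype_le_isUnit (p : Ideal A) [p.IsPrime] :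
    p.primeCompl.map A.subtype ≤ IsUnit.submonoid K := by
  rintro _ ⟨s, hs, rfl⟩
  refine isUnit_iff_ne_zero.mpr fun h0 ↦ hs ?_
  rw [show s = 0 from Subtype.ext h0]
  exact p.zero_mem

theorem bijective_algebraMap_localization_primeCompl_map (p : Ideal A) [p.IsPrime] :
    Function.Bijective (algebraMap K (Localization (p.primeCompl.map A.subtype))) :=
  (IsLocalization.atUnits K _ p.primeCompl_map_subtype_le_isUnit).bijective

theorem algebraMap_mem_range_locMap_iff (p : Ideal A) [p.IsPrime] {x : K} :
    algebraMap K _ x ∈ (locMap A p.primeCompl).range ↔ ∃ r s : A, s ∉ p ∧ x * s = r := by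
  simp_rw [IsLocalization.mem_range_iff p.primeCompl, locMap_algebraMap, ← map_mul,
    (bijective_algebraMap_localization_primeCompl_map p).injective.eq_iff]
  exact ⟨fun ⟨r, s, hs⟩ ↦ ⟨r, s, s.2, hs⟩, fun ⟨r, s, hs, hx⟩ ↦ ⟨r, ⟨s, hs⟩, hx⟩⟩

theorem PerinormalIn.isFractionRing (h : PerinormalIn A) : IsFractionRing A K := by
  set L := Localization ((⊥ : Ideal A).primeCompl.map A.subtype)
  let e : K ≃+* (⊤ : Subring L) :=
    (RingEquiv.ofBijective _ (bijective_algebraMap_localization_primeCompl_map ⊥)).trans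
      Subring.topEquiv.symm
  have hfield : IsField (⊤ : Subring L) := e.symm.toMulEquiv.isField (Field.toIsField K)
  have := e.isLocalRing
  let g : A →+* (⊤ : Subring L) := e.toRingHom.comp A.subtype
  have hg : Function.Injective g := e.injective.comp Subtype.val_injective
  have hmax : (maximalIdeal (⊤ : Subring L)).comap g = ⊥ := by
    rw [isField_iff_maximalIdeal_eq.mp hfield, Ideal.comap_bot_of_injective g hg]
  have htop : ⊤ = (locMap A (⊥ : Ideal A).primeCompl).range :=
    h.eq_range_locMap ⊥ ⊤ g (fun _ ↦ rfl) hmax (goingDownHom_of_injective_of_isField hg hfield)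
  refine .of_field _ _ fun z ↦ ?_
  obtain ⟨r, s, hs, hzs⟩ :=
    (algebraMap_mem_range_locMap_iff ⊥).mp (htop ▸ Subring.mem_top (algebraMap K L z))
  exact ⟨r, s, eq_div_of_mul_eq (by simpa using hs) hzs⟩

theorem PerinormalIn.perinormalDomain (h : PerinormalIn A) : PerinormalDomain A := by
  have := h.isFractionRing
  intro T hAT _ hgd
  set g := (algebraMap A (FractionRing A)).codRestrict T fun x ↦ hAT ⟨x, rfl⟩
  set p := (maximalIdeal T).comap g
  set L := Localization (p.primeCompl.map A.subtype)
  let e := FractionRing.algEquiv A K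
  let j : FractionRing A ≃+* L :=
    e.toRingEquiv.trans (.ofBijective _ (bijective_algebraMap_localization_primeCompl_map p))
  set T' := T.map (j : FractionRing A →+* L)
  let ψ : T ≃+* T' := T.equivMapOfInjective _ j.injective
  have := ψ.isLocalRing
  have hmax : (maximalIdeal T').comap ((ψ : T →+* T').comp g) = p := by
    rw [← Ideal.comap_comap, IsLocalRing.maximalIdeal_comap]
  have hT' : T' = (locMap A p.primeCompl).range :=
    h.eq_range_locMap p T' ((ψ : T →+* T').comp g)
      (fun a ↦ congrArg (algebraMap K L) (e.commutes a)) hmax (hgd.ringEquiv_comp ψ)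
  refine ⟨p, inferInstance, Set.ext fun x ↦ ?_⟩
  have he (r s : A) : x * algebraMap A _ s = algebraMap A _ r ↔ e x * s = r := by
    rw [← e.injective.eq_iff, map_mul, e.commutes, e.commutes]
    rfl
  calc x ∈ T ↔ j x ∈ T' := by
        rw [Subring.mem_map_equiv, RingEquiv.symm_apply_apply]
    _ ↔ ∃ r s : A, s ∉ p ∧ e x * s = r := by
        rw [hT']
        exact algebraMap_mem_range_locMap_iff p
    _ ↔ x ∈ {x | ∃ r s : A, s ∉ p ∧ x * algebraMap A _ s = algebraMap A _ r} := by
        simp only [Set.mem_ofPred_eq, he]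

end Field

/-- If an integral domain `A` contained in a field `K` is perinormal in `K`,
then `K` is the fraction field of `A`, and hence `A` is a perinormal domain. -/
theorem isFractionRing_of_perinormalIn_field {K : Type*} [Field K] (A : Subring K)
    (h : PerinormalIn A) :
    IsFractionRing A K ∧ PerinormalDomain A :=
  ⟨h.isFractionRing, h.perinormalDomain⟩
end
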